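/- arXiv:1608.08014 — 2 statements merged into one kernel-verified Lean document; each statement's English description precedes it below -/
import Mathlib

section
/- Let B be Exponential(1), independent of Y = Σ_{z∈S} λ_z X_z with X_z independent Exponential(1) and λ_z > 0 pairwise distinct. For constants λ_j, ν, ξ > 0, P[λ_j B / (ν + Y) ≥ ξ] = e^{−ξν/λ_j} · (1 − Σ_{z∈S} (∏_{k∈S,k≠z}(λ_z−λ_k)^{-1}) λ_z^{|S|} ξ / (λ_j + λ_z ξ)). -/
/-!
Clearing the denominator turns the event into `{T ≤ B}` with
`T = ξν/λ_j + Σ_z (ξλ_z/λ_j) X_z`, a nonnegative variable independent of `B`; the exponential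
tail of `B` makes its probability the Laplace transform `E[e^{-T}]`. Independence factors this
as `e^{-ξν/λ_j} ∏_z λ_j / (λ_j + λ_z ξ)`, and Lagrange interpolation of `X^{|S|}` at the
distinct nodes `λ_z` expands the product into the partial fractions of the closed form.
-/

open MeasureTheory ProbabilityTheory Real Set

open Finset Polynomial in
lemma Lagrange.prod_div_sub_eq_one_add_sum {F : Type*} [Field F] {ι : Type*} [DecidableEq ι]
    {s : Finset ι} {v : ι → F} (hvs : Set.InjOn v s) {x : F} (hx : ∀ i ∈ s, x ≠ v i) :
    ∏ i ∈ s, x / (x - v i) = 1 + ∑ i ∈ s, nodalWeight s v i * v i ^ #s / (x - v i) := by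
  have hN : eval x (nodal s v) ≠ 0 := eval_nodal_not_at_node hx
  have hdeg : (X ^ #s - nodal s v).degree < ((#s : ℕ) : WithBot ℕ) := by
    simpa only [degree_X_pow] using degree_sub_lt_left (p := X ^ #s) (q := nodal s v)
      (by rw [degree_X_pow, degree_nodal]) (pow_ne_zero _ X_ne_zero)
      (by rw [(monic_X_pow _).leadingCoeff, nodal_monic.leadingCoeff])
  have key := congrArg (eval x) (eq_interpolate hvs hdeg)
  rw [eval_interpolate_not_at_node _ hx, eval_sub, eval_pow, eval_X] at key
  have hsum : ∑ i ∈ s, nodalWeight s v i * (x - v i)⁻¹ * eval (v i) (X ^ #s - nodal s v)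
      = ∑ i ∈ s, nodalWeight s v i * v i ^ #s / (x - v i) := sum_congr rfl fun i hi => by
    rw [eval_sub, eval_nodal_at_node hi, sub_zero, eval_pow, eval_X, div_eq_mul_inv]
    ring
  rw [prod_div_distrib, prod_const, ← eval_nodal, div_eq_iff hN]
  linear_combination key + eval x (nodal s v) * hsum

open Finset in
lemma prod_div_add_mul_eq_one_sub_sum {F : Type*} [Field F] {ι : Type*} [DecidableEq ι]
    {s : Finset ι} {v : ι → F} (hvs : Set.InjOn v s) {t ξ : F} (hξ : ξ ≠ 0)
    (ht : ∀ i ∈ s, t + v i * ξ ≠ 0) :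
    ∏ i ∈ s, t / (t + v i * ξ) =
      1 - ∑ i ∈ s, (∏ j ∈ s.erase i, (v i - v j)⁻¹) * v i ^ #s * ξ / (t + v i * ξ) := by
  have hsub : ∀ i ∈ s, -(t / ξ) - v i = -((t + v i * ξ) / ξ) := fun i _ => by
    field_simp; ring
  have hx : ∀ i ∈ s, -(t / ξ) ≠ v i := fun i hi h => by
    have := hsub i hi
    rw [h, sub_self, zero_eq_neg, div_eq_zero_iff] at this
    exact this.elim (ht i hi) hξ
  calc ∏ i ∈ s, t / (t + v i * ξ)
      = ∏ i ∈ s, -(t / ξ) / (-(t / ξ) - v i) := prod_congr rfl fun i hi => by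
        rw [hsub i hi, neg_div_neg_eq, div_div_div_cancel_right₀ hξ]
    _ = 1 + ∑ i ∈ s, Lagrange.nodalWeight s v i * v i ^ #s / (-(t / ξ) - v i) :=
        Lagrange.prod_div_sub_eq_one_add_sum hvs hx
    _ = _ := by
        rw [sub_eq_add_neg, ← sum_neg_distrib]
        refine congrArg (1 + ·) (sum_congr rfl fun i hi => ?_)
        rw [hsub i hi, Lagrange.nodalWeight, div_neg, div_div_eq_mul_div]

namespace ProbabilityTheory

lemma expMeasure_eq_withDensity (r : ℝ) :
    expMeasure r = volume.withDensity (exponentialPDF r) := rfl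

lemma expMeasure_Iio_zero (r : ℝ) : expMeasure r (Iio 0) = 0 := by
  rw [expMeasure_eq_withDensity, withDensity_apply _ measurableSet_Iio]
  exact lintegral_exponentialPDF_of_nonpos le_rfl

lemma ae_nonneg_of_map_eq_expMeasure {Ω : Type*} [MeasurableSpace Ω] {P : Measure Ω}
    {X : Ω → ℝ} {r : ℝ} (hX : AEMeasurable X P) (hlaw : P.map X = expMeasure r) :
    ∀ᵐ ω ∂P, 0 ≤ X ω := by
  have h : ∀ᵐ x ∂(expMeasure r), 0 ≤ x := by
    rw [ae_iff]
    simp only [not_le]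
    exact expMeasure_Iio_zero r
  exact ae_of_ae_map hX (hlaw ▸ h)

lemma expMeasure_Ici {r t : ℝ} (hr : 0 < r) (ht : 0 ≤ t) :
    expMeasure r (Ici t) = ENNReal.ofReal (exp (-(r * t))) := by
  have := isProbabilityMeasure_expMeasure hr
  have : NullSingletonClass (expMeasure r) :=
    ⟨fun x => withDensity_absolutelyContinuous _ _ (measure_singleton x)⟩
  rw [← measure_congr Ioi_ae_eq_Ici, ← compl_Iic, prob_compl_eq_one_sub measurableSet_Iic,
    ← ofReal_cdf, cdf_expMeasure_eq hr, if_pos ht, ← ENNReal.ofReal_one,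
    ← ENNReal.ofReal_sub _ (sub_nonneg.2 (exp_le_one_iff.2 (neg_nonpos.2 (by positivity)))),
    sub_sub_cancel]

lemma lintegral_exp_neg_mul_expMeasure {r a : ℝ} (hr : 0 < r) (hra : 0 < r + a) :
    ∫⁻ x, ENNReal.ofReal (exp (-(a * x))) ∂(expMeasure r) = ENNReal.ofReal (r / (r + a)) := by
  have hdensity : ∀ x, exponentialPDF r x * ENNReal.ofReal (exp (-(a * x)))
      = ENNReal.ofReal (r / (r + a)) * exponentialPDF (r + a) x := fun x => by
    rcases lt_or_ge x 0 with hx | hx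
    · simp only [exponentialPDF_of_neg hx, zero_mul, mul_zero]
    · rw [exponentialPDF_of_nonneg hx, exponentialPDF_of_nonneg hx,
        ← ENNReal.ofReal_mul (by positivity), ← ENNReal.ofReal_mul (by positivity)]
      congr 1
      field_simp
      rw [← exp_add]
      ring_nf
  have hm : ∀ r, Measurable (exponentialPDF r) := fun r =>
    (measurable_exponentialPDFReal r).ennreal_ofReal
  rw [expMeasure_eq_withDensity, lintegral_withDensity_eq_lintegral_mul _ (hm r) (by fun_prop)]
  simp only [Pi.mul_apply, hdensity]
  rw [lintegral_const_mul _ (hm _),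
    lintegral_exponentialPDF_eq_one hra, mul_one]

section Independence

variable {Ω : Type*} [MeasurableSpace Ω] {P : Measure Ω}

lemma lintegral_exp_neg_sum_of_iIndepFun {ι : Type*} {X : ι → Ω → ℝ}
    (hXm : ∀ i, Measurable (X i)) (hX : iIndepFun X P) {r a : ι → ℝ} (hr : ∀ i, 0 < r i)
    (hlaw : ∀ i, P.map (X i) = expMeasure (r i)) (hra : ∀ i, 0 < r i + a i) (s : Finset ι) :
    ∫⁻ ω, ENNReal.ofReal (exp (-∑ i ∈ s, a i * X i ω)) ∂P =
      ∏ i ∈ s, ENNReal.ofReal (r i / (r i + a i)) := by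
  have hprod : ∀ ω, ENNReal.ofReal (exp (-∑ i ∈ s, a i * X i ω)) =
      ∏ i ∈ s, ENNReal.ofReal (exp (-(a i * X i ω))) := fun ω => by
    rw [← ENNReal.ofReal_prod_of_nonneg fun _ _ => (exp_pos _).le, ← exp_sum,
      Finset.sum_neg_distrib]
  simp only [hprod]
  rw [lintegral_prod_eq_prod_lintegral_of_indepFun s
      (fun i ω => ENNReal.ofReal (exp (-(a i * X i ω))))
      (hX.comp (fun i x => ENNReal.ofReal (exp (-(a i * x)))) fun i => by fun_prop)
      fun i => by fun_prop]
  refine Finset.prod_congr rfl fun i _ => ?_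
  rw [← lintegral_map (f := fun x => ENNReal.ofReal (exp (-(a i * x)))) (by fun_prop) (hXm i),
    hlaw i, lintegral_exp_neg_mul_expMeasure (hr i) (hra i)]

lemma IndepFun.measure_le_eq_lintegral_exp [IsFiniteMeasure P] {B T : Ω → ℝ} {r : ℝ}
    (hr : 0 < r) (hB : Measurable B) (hT : Measurable T) (hBT : IndepFun B T P)
    (hlaw : P.map B = expMeasure r) (hT0 : ∀ᵐ ω ∂P, 0 ≤ T ω) :
    P {ω | T ω ≤ B ω} = ∫⁻ ω, ENNReal.ofReal (exp (-(r * T ω))) ∂P := by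
  have hle : MeasurableSet {p : ℝ × ℝ | p.2 ≤ p.1} := measurableSet_le measurable_snd measurable_fst
  have hsection : ∀ t : ℝ, (fun b => (b, t)) ⁻¹' {p : ℝ × ℝ | p.2 ≤ p.1} = Ici t := fun t => rfl
  calc P {ω | T ω ≤ B ω}
      = P.map (fun ω => (B ω, T ω)) {p | p.2 ≤ p.1} := (Measure.map_apply (hB.prodMk hT) hle).symm
    _ = ∫⁻ t, expMeasure r (Ici t) ∂(P.map T) := by
        rw [(indepFun_iff_map_prod_eq_prod_map_map hB.aemeasurable hT.aemeasurable).mp hBT,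
          Measure.prod_apply_symm hle, hlaw]
        simp only [hsection]
    _ = ∫⁻ t, ENNReal.ofReal (exp (-(r * t))) ∂(P.map T) := by
        refine lintegral_congr_ae ?_
        filter_upwards [ae_map_iff hT.aemeasurable measurableSet_Ici |>.mpr hT0] with t ht
        exact expMeasure_Ici hr ht
    _ = ∫⁻ ω, ENNReal.ofReal (exp (-(r * T ω))) ∂P := lintegral_map (by fun_prop) hT

lemma iIndepFun.indepFun_none_some {ι : Type*} [Fintype ι] {β : Type*} [MeasurableSpace β]
    {X : Option ι → Ω → β} (hX : iIndepFun X P) (hXm : ∀ i, Measurable (X i)) :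
    IndepFun (X none) (fun ω z => X (some z) ω) P := by
  classical
  let S : Finset (Option ι) := Finset.univ.map Function.Embedding.some
  have hS : ∀ z, some z ∈ S := fun z => by simp [S]
  have h := hX.indepFun_finset {none} S (by simp [S]) hXm
  exact h.comp (measurable_pi_apply ⟨none, Finset.mem_singleton_self _⟩)
    (measurable_pi_lambda _ fun z => measurable_pi_apply ⟨some z, hS z⟩)

lemma measure_add_sum_le_of_iIndepFun {ι : Type*} [Fintype ι] {X : Option ι → Ω → ℝ}
    (hXm : ∀ i, Measurable (X i)) (hX : iIndepFun X P)
    (hlaw : ∀ i, P.map (X i) = expMeasure 1) {c : ℝ} {a : ι → ℝ} (hc : 0 ≤ c)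
    (ha : ∀ z, 0 ≤ a z) :
    P {ω | c + ∑ z, a z * X (some z) ω ≤ X none ω} =
      ENNReal.ofReal (exp (-c) * ∏ z, 1 / (1 + a z)) := by
  have := hX.isProbabilityMeasure
  set T : Ω → ℝ := fun ω => c + ∑ z, a z * X (some z) ω
  have hT0 : ∀ᵐ ω ∂P, 0 ≤ T ω := by
    filter_upwards [ae_all_iff.2 fun i => ae_nonneg_of_map_eq_expMeasure (hXm i).aemeasurable
      (hlaw i)] with ω hω
    exact add_nonneg hc (Finset.sum_nonneg fun z _ => mul_nonneg (ha z) (hω (some z)))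
  have hBT : IndepFun (X none) T P :=
    (hX.indepFun_none_some hXm).comp (ψ := fun v : ι → ℝ => c + ∑ z, a z * v z)
      measurable_id (by fun_prop)
  calc P {ω | T ω ≤ X none ω}
      = ∫⁻ ω, ENNReal.ofReal (exp (-(1 * T ω))) ∂P :=
        hBT.measure_le_eq_lintegral_exp one_pos (hXm none) (by fun_prop) (hlaw none) hT0
    _ = ENNReal.ofReal (exp (-c)) *
          ∫⁻ ω, ENNReal.ofReal (exp (-∑ z, a z * X (some z) ω)) ∂P := by
        simp only [T, one_mul, neg_add, exp_add, ENNReal.ofReal_mul (exp_pos _).le]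
        exact lintegral_const_mul _ (by fun_prop)
    _ = ENNReal.ofReal (exp (-c)) * ∏ z, ENNReal.ofReal (1 / (1 + a z)) := by
        rw [lintegral_exp_neg_sum_of_iIndepFun (fun z => hXm (some z))
          (hX.precomp (Option.some_injective ι)) (fun _ => one_pos) (fun z => hlaw (some z))
          (fun z => by linarith [ha z])]
    _ = _ := by
        rw [ENNReal.ofReal_mul (exp_pos _).le,
          ENNReal.ofReal_prod_of_nonneg fun z _ => by have := ha z; positivity]

end Independence

end ProbabilityTheory

theorem stmt3_general {Ω : Type*} [MeasurableSpace Ω] (P : Measure Ω)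
    {ι : Type*} [Fintype ι] [DecidableEq ι]
    (X : Option ι → Ω → ℝ) (hXm : ∀ i, Measurable (X i))
    (hindep : iIndepFun X P)
    (hexp : ∀ i, Measure.map (X i) P = expMeasure 1)
    (lam : ι → ℝ) (hpos : ∀ z, 0 < lam z) (hdist : Function.Injective lam)
    (lamj ν ξ : ℝ) (hlamj : 0 < lamj) (hν : 0 < ν) (hξ : 0 < ξ) :
    P {ω | lamj * X none ω / (ν + ∑ z, lam z * X (some z) ω) ≥ ξ} =
      ENNReal.ofReal (Real.exp (-(ξ * ν / lamj)) *
        (1 - ∑ z, (∏ k ∈ Finset.univ.erase z, (lam z - lam k)⁻¹) *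
          lam z ^ (Fintype.card ι) * ξ / (lamj + lam z * ξ))) := by
  have ha : ∀ z, 0 ≤ ξ / lamj * lam z := fun z => by have := hpos z; positivity
  have hevent : {ω | lamj * X none ω / (ν + ∑ z, lam z * X (some z) ω) ≥ ξ}
      =ᵐ[P] {ω | ξ * ν / lamj + ∑ z, ξ / lamj * lam z * X (some z) ω ≤ X none ω} := by
    refine Filter.eventuallyEq_set.2 ?_
    filter_upwards [ae_all_iff.2 fun i => ae_nonneg_of_map_eq_expMeasure (hXm i).aemeasurable
      (hexp i)] with ω hω
    have hY : 0 ≤ ∑ z, lam z * X (some z) ω :=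
      Finset.sum_nonneg fun z _ => mul_nonneg (hpos z).le (hω _)
    have hT : ξ * ν / lamj + ∑ z, ξ / lamj * lam z * X (some z) ω
        = ξ * (ν + ∑ z, lam z * X (some z) ω) / lamj := by
      simp only [mul_assoc, ← Finset.mul_sum]
      ring
    rw [ge_iff_le, le_div_iff₀ (by positivity), hT, div_le_iff₀ hlamj, mul_comm lamj]
  rw [measure_congr hevent, measure_add_sum_le_of_iIndepFun hXm hindep hexp (by positivity) ha,
    ← Finset.card_univ, ← prod_div_add_mul_eq_one_sub_sum hdist.injOn hξ.ne'
      fun z _ => (add_pos hlamj (mul_pos (hpos z) hξ)).ne']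
  refine congrArg (fun p => ENNReal.ofReal (_ * p)) (Finset.prod_congr rfl fun z _ => ?_)
  field_simp

/-- Closed-form successful transmission probability of Corollary 2: with `B` and the
`X_z` mutually independent `Exponential(1)` random variables, `λ_z > 0` pairwise
distinct and `λ_j, ν, ξ > 0`,
`P[λ_j B / (ν + Σ_z λ_z X_z) ≥ ξ]
  = e^{−ξν/λ_j} (1 − Σ_z (∏_{k≠z}(λ_z−λ_k)⁻¹) λ_z^{|S|} ξ / (λ_j + λ_z ξ))`. -/
theorem stmt3 {Ω : Type*} [MeasurableSpace Ω] (P : Measure Ω) [IsProbabilityMeasure P]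
    {ι : Type*} [Fintype ι] [Nonempty ι] [DecidableEq ι]
    (X : Option ι → Ω → ℝ) (hXm : ∀ i, Measurable (X i))
    (hindep : iIndepFun X P)
    (hexp : ∀ i, Measure.map (X i) P = expMeasure 1)
    (lam : ι → ℝ) (hpos : ∀ z, 0 < lam z) (hdist : Function.Injective lam)
    (lamj ν ξ : ℝ) (hlamj : 0 < lamj) (hν : 0 < ν) (hξ : 0 < ξ) :
    P {ω | lamj * X none ω / (ν + ∑ z, lam z * X (some z) ω) ≥ ξ} =
      ENNReal.ofReal (Real.exp (-(ξ * ν / lamj)) *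
        (1 - ∑ z, (∏ k ∈ Finset.univ.erase z, (lam z - lam k)⁻¹) *
          lam z ^ (Fintype.card ι) * ξ / (lamj + lam z * ξ))) :=
  stmt3_general P X hXm hindep hexp lam hpos hdist lamj ν ξ hlamj hν hξ
end

section
/- For any t1, t2 > 0 and θ > 0, ∫_0^{t1} ln(1 + t2/(ν + y)) e^{−θ y} dy = D(t1, ν + t2) − D(t1, ν), where D(t1, t) := θ^{-1} [ ln t − ln(t1 + t) e^{−t1 θ} + e^{t θ} ( Ei(−(t1+t)θ) − Ei(−t θ) ) ], with Ei the exponential integral, and ν > 0. -/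
/-!
Integrating by parts,
`∫ log (t + y) e^{-θy} dy = -θ⁻¹ log (t + y) e^{-θy} + θ⁻¹ ∫ e^{-θy} / (t + y) dy`,
and the substitution `u = (t + y) θ` turns the last integral into `e^{tθ} Ei (-(t + y) θ)`.
So `logExpPrimitive θ t` is a primitive of `y ↦ log (t + y) e^{-θy}` and `Dfun θ t1 t` is its
increment over `[0, t1]`; the theorem follows from
`log (1 + t2 / (ν + y)) = log (ν + t2 + y) - log (ν + y)`.
-/

open MeasureTheory Real Set

/-- The exponential integral `Ei(x) = −∫_{−x}^∞ e^{−t}/t dt`. -/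
noncomputable def Ei (x : ℝ) : ℝ := -∫ t in Set.Ioi (-x), Real.exp (-t) / t

/-- `D(t1, t) = θ⁻¹ [ln t − ln(t1+t) e^{−t1 θ} + e^{t θ}(Ei(−(t1+t)θ) − Ei(−tθ))]`. -/
noncomputable def Dfun (θ t1 t : ℝ) : ℝ :=
  θ⁻¹ * (Real.log t - Real.log (t1 + t) * Real.exp (-t1 * θ) +
    Real.exp (t * θ) * (Ei (-((t1 + t) * θ)) - Ei (-(t * θ))))

theorem hasDerivAt_integral_Ioi {E : Type*} [NormedAddCommGroup E] [NormedSpace ℝ E]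
    [CompleteSpace E] {f : ℝ → E} {a c : ℝ} (hca : c < a)
    (hf : IntegrableOn f (Ioi c)) (hfa : ContinuousAt f a) :
    HasDerivAt (fun x => ∫ t in Ioi x, f t) (-f a) a := by
  have hFTC : HasDerivAt (fun x => ∫ t in x..a, f t) (-f a) a :=
    intervalIntegral.integral_hasDerivAt_left .refl
      (AEStronglyMeasurable.stronglyMeasurableAtFilter_of_mem hf.aestronglyMeasurable
        (Ioi_mem_nhds hca)) hfa
  refine (hFTC.add_const (∫ t in Ioi a, f t)).congr_of_eventuallyEq ?_
  filter_upwards [Ioi_mem_nhds hca] with x hx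
  exact (intervalIntegral.integral_interval_add_Ioi (hf.mono_set (Ioi_subset_Ioi hx.le))
    (hf.mono_set (Ioi_subset_Ioi hca.le))).symm

theorem integrableOn_exp_neg_div_Ioi {a : ℝ} (ha : 0 < a) :
    IntegrableOn (fun t => exp (-t) / t) (Ioi a) := by
  refine ((exp_neg_integrableOn_Ioi a one_pos).mul_const a⁻¹).mono' ?_ ?_
  · exact ContinuousOn.aestronglyMeasurable (by fun_prop (disch := grind)) measurableSet_Ioi
  · filter_upwards [ae_restrict_mem measurableSet_Ioi] with t (ht : a < t)
    rw [norm_div, Real.norm_of_nonneg (exp_pos _).le, Real.norm_of_nonneg (by linarith),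
      neg_one_mul, div_eq_mul_inv]
    gcongr

theorem hasDerivAt_Ei {x : ℝ} (hx : x < 0) : HasDerivAt Ei (exp x / x) x := by
  have hΦ := hasDerivAt_integral_Ioi (by linarith : -x / 2 < -x)
    (integrableOn_exp_neg_div_Ioi (by linarith : 0 < -x / 2))
    (by fun_prop (disch := linarith) : ContinuousAt (fun t => exp (-t) / t) (-x))
  refine (hΦ.comp x (hasDerivAt_neg x)).neg.congr_deriv ?_
  rw [neg_neg, div_neg]
  ring

noncomputable def logExpPrimitive (θ t y : ℝ) : ℝ :=
  θ⁻¹ * (-(log (t + y) * exp (-θ * y)) + exp (t * θ) * Ei (-((t + y) * θ)))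

theorem hasDerivAt_logExpPrimitive {θ t y : ℝ} (hθ : 0 < θ) (hty : 0 < t + y) :
    HasDerivAt (logExpPrimitive θ t) (log (t + y) * exp (-θ * y)) y := by
  have hshift : HasDerivAt (fun y => t + y) 1 y := (hasDerivAt_id y).const_add t
  have hEi := (hasDerivAt_Ei (by nlinarith : -((t + y) * θ) < 0)).comp y
    (hshift.mul_const θ).neg
  have hexp : exp (t * θ) * exp (-((t + y) * θ)) = exp (-θ * y) := by
    rw [← exp_add]; ring_nf
  refine (((hshift.log hty.ne').mul ((hasDerivAt_id y).const_mul (-θ)).exp).neg.add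
    (hEi.const_mul (exp (t * θ)))).const_mul θ⁻¹ |>.congr_deriv ?_
  simp only [id, ← hexp]
  field_simp
  ring

theorem add_pos_of_mem_uIcc {t t1 y : ℝ} (ht : 0 < t) (ht1 : 0 < t + t1)
    (hy : y ∈ uIcc 0 t1) : 0 < t + y := by
  rcases mem_uIcc.mp hy with hy | hy <;> linarith [hy.1]

theorem intervalIntegrable_log_add_mul_exp {θ t t1 : ℝ} (ht : 0 < t) (ht1 : 0 < t + t1) :
    IntervalIntegrable (fun y => log (t + y) * exp (-θ * y)) volume 0 t1 := by
  refine ContinuousOn.intervalIntegrable fun y hy => ?_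
  have := add_pos_of_mem_uIcc ht ht1 hy
  fun_prop (disch := positivity)

theorem integral_log_add_mul_exp {θ t t1 : ℝ} (hθ : 0 < θ) (ht : 0 < t) (ht1 : 0 < t + t1) :
    ∫ y in 0..t1, log (t + y) * exp (-θ * y) = Dfun θ t1 t := by
  rw [intervalIntegral.integral_eq_sub_of_hasDerivAt
    (fun y hy => hasDerivAt_logExpPrimitive hθ ?_) (intervalIntegrable_log_add_mul_exp ht ht1)]
  · simp only [logExpPrimitive, Dfun, add_zero, mul_zero, exp_zero, mul_one]
    ring_nf
  · exact add_pos_of_mem_uIcc ht ht1 hy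

/-- Closed form of `μ_0` (Lemma 1): for `t1, t2, θ, ν > 0`,
`∫_0^{t1} ln(1 + t2/(ν + y)) e^{−θ y} dy = D(t1, ν + t2) − D(t1, ν)`. -/
theorem stmt4 (t1 t2 θ ν : ℝ) (ht1 : 0 < t1) (ht2 : 0 < t2) (hθ : 0 < θ) (hν : 0 < ν) :
    ∫ y in Set.Ioc (0 : ℝ) t1, Real.log (1 + t2 / (ν + y)) * Real.exp (-θ * y) =
      Dfun θ t1 (ν + t2) - Dfun θ t1 ν := by
  have hνt2 : 0 < ν + t2 := by linarith
  have hlog_div : EqOn (fun y => log (1 + t2 / (ν + y)) * exp (-θ * y))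
      (fun y => log (ν + t2 + y) * exp (-θ * y) - log (ν + y) * exp (-θ * y)) (uIcc 0 t1) := by
    intro y hy
    have hνy := add_pos_of_mem_uIcc hν (by linarith) hy
    dsimp only
    rw [← sub_mul, ← log_div (by linarith) hνy.ne']
    congr 2
    field_simp
    ring
  rw [← intervalIntegral.integral_of_le ht1.le, intervalIntegral.integral_congr hlog_div,
    intervalIntegral.integral_sub (intervalIntegrable_log_add_mul_exp hνt2 (by linarith))
      (intervalIntegrable_log_add_mul_exp hν (by linarith)),
    integral_log_add_mul_exp hθ hνt2 (by linarith),
    integral_log_add_mul_exp hθ hν (by linarith)]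
end
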